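/- Let G be an abelian topological group that is subreflexive, i.e., the evaluation map from G to its double Pontryagin dual, sending g to the character χ ↦ χ(g), is a topological group embedding. Then G is metrizable if and only if its Pontryagin dual Ĝ is hemicompact. -/

import Mathlib

open Filter Topology Set

/-- A hemicompact space. -/
def Hemicompact (X : Type*) [TopologicalSpace X] : Prop :=
  ∃ K : ℕ → Set X, (∀ n, IsCompact (K n)) ∧ ∀ C : Set X, IsCompact C → ∃ n, C ⊆ K n

/-- The canonical evaluation map from a topological abelian group into its double
Pontryagin dual, sending `g` to the character `χ ↦ χ g`. -/
noncomputable def doubleDualEval (G : Type*) [CommGroup G] [TopologicalSpace G]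
    [IsTopologicalGroup G] (g : G) : PontryaginDual (PontryaginDual G) where
  toFun χ := χ g
  map_one' := rfl
  map_mul' _ _ := rfl
  continuous_toFun :=
    ContinuousEvalConst.continuous_eval_const
      (F := ContinuousMonoidHom G Circle) g

/-- An abelian topological group is subreflexive if the canonical evaluation map into its
double Pontryagin dual is a topological embedding (it is a group homomorphism by
construction). -/
def Subreflexive (G : Type*) [CommGroup G] [TopologicalSpace G] [IsTopologicalGroup G] : Prop :=
  Topology.IsEmbedding (doubleDualEval G)

/-!
If `G` is metrizable, let `Uₙ` be a countable base of neighbourhoods of `1` and `W` a closed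
neighbourhood of `1` inside the open right half-circle. The characters mapping `Uₙ` into `W` are
equicontinuous, since a point of the circle whose first `2^k`-th powers all lie in the right
half-circle is close to `1`; by Arzelà–Ascoli they form a compact set. Every compact set of
characters lies in one of these: testing along a sequence `xₙ → 1`, whose closure is compact,
the compact-open topology controls the values on it uniformly.

Conversely, if `Ĝ` is hemicompact, the compact-open uniformity of `C(Ĝ, 𝕋)` is countably
generated, so the bidual is metrizable, and subreflexivity embeds `G` into it.
-/

open scoped Uniformity

theorem Hemicompact.exists_monotone {X : Type*} [TopologicalSpace X] (h : Hemicompact X) :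
    ∃ K : ℕ → Set X, (∀ n, IsCompact (K n)) ∧ Monotone K ∧
      ∀ C : Set X, IsCompact C → ∃ n, C ⊆ K n := by
  obtain ⟨K, hKc, hK⟩ := h
  refine ⟨fun n ↦ ⋃ i ≤ n, K i, fun n ↦ (finite_Iic n).isCompact_biUnion fun i _ ↦ hKc i,
    fun m n hmn ↦ biUnion_subset_biUnion_left (Iic_subset_Iic.2 hmn), fun C hC ↦ ?_⟩
  obtain ⟨n, hn⟩ := hK C hC
  exact ⟨n, hn.trans (subset_biUnion_of_mem (mem_Iic.2 le_rfl))⟩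

theorem Hemicompact.metrizableSpace_continuousMap {X Y : Type*} [TopologicalSpace X]
    [MetricSpace Y] (h : Hemicompact X) : TopologicalSpace.MetrizableSpace C(X, Y) := by
  obtain ⟨K, hKc, hKmono, hK⟩ := h.exists_monotone
  have : IsCountablyGenerated (𝓤 C(X, Y)) := by
    rw [← ContinuousMap.isUniformEmbedding_toUniformOnFunIsCompact.comap_uniformity]
    have := UniformOnFun.isCountablyGenerated_uniformity (β := Y) {K | IsCompact K} hKc hKmono hK
    exact Filter.comap.isCountablyGenerated _ _
  exact UniformSpace.metrizableSpace

theorem ContinuousMap.eventually_forall_mem_of_isCompact {X Y : Type*} [TopologicalSpace X]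
    [FirstCountableTopology X] [TopologicalSpace Y] {C : Set C(X, Y)} (hC : IsCompact C)
    {x₀ : X} {O : Set Y} (hO : IsOpen O) (hCO : ∀ f ∈ C, f x₀ ∈ O) :
    ∀ᶠ x in 𝓝 x₀, ∀ f ∈ C, f x ∈ O := by
  rw [eventually_iff_seq_eventually]
  intro x hx
  have hs : ∀ᶠ p : ℕ × C(X, Y) in atTop ×ˢ 𝓝ˢ C, p.2 (x p.1) ∈ O := by
    refine hC.mem_prod_nhdsSet_of_forall fun f hf ↦ ?_
    obtain ⟨N, hN⟩ := eventually_atTop.1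
      (((f.continuous.tendsto x₀).comp hx).eventually (hO.mem_nhds (hCO f hf)))
    set K := insert x₀ (range fun n ↦ x (n + N))
    have hK : IsCompact K := (hx.comp (tendsto_add_atTop_nat N)).isCompact_insert_range
    have hW : {g : C(X, Y) | MapsTo g K O} ∈ 𝓝 f := by
      refine (isOpen_setOfPred_mapsTo hK hO).mem_nhds ?_
      rintro _ (rfl | ⟨n, rfl⟩)
      exacts [hCO f hf, hN _ le_add_self]
    refine mem_prod_iff.2 ⟨Ici N, Ici_mem_atTop N, _, hW, fun ⟨n, g⟩ ⟨hn, hg⟩ ↦ ?_⟩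
    simpa [Nat.sub_add_cancel (mem_Ici.1 hn)] using hg (mem_insert_of_mem _ ⟨n - N, rfl⟩)
  exact hs.curry.mono fun n hn ↦ hn.self_of_nhdsSet

theorem ContinuousMonoidHom.isCompact_setOf_mapsTo {X Y : Type*} [TopologicalSpace X] [Group X]
    [IsTopologicalGroup X] [UniformSpace Y] [Group Y] [IsUniformGroup Y] [T2Space Y]
    [CompactSpace Y] {U : Set X} {V : Set Y} (hV : IsClosed V)
    (h : EquicontinuousAt (fun f : {f : X →* Y | MapsTo f U V} ↦ (f : X → Y)) 1) :
    IsCompact {f : X →ₜ* Y | MapsTo f U V} := by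
  set T : Set (X → Y) := range (fun f : {f : X →* Y | MapsTo f U V} ↦ (f : X → Y))
  have hT : Equicontinuous ((↑) : T → X → Y) :=
    equicontinuous_iff_range.1 (equicontinuous_of_equicontinuousAt_one _ h)
  have hTclosed : IsClosed T := by
    have : T = pi U (fun _ ↦ V) ∩ range ((↑) : (X →* Y) → X → Y) := by
      ext g
      refine ⟨fun ⟨f, hf⟩ ↦ hf ▸ ⟨f.2, f, rfl⟩, fun ⟨hg, f, hf⟩ ↦ ⟨⟨f, ?_⟩, hf⟩⟩
      exact show MapsTo f U V from hf ▸ hg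
    exact this ▸ (isClosed_set_pi fun _ _ ↦ hV).inter (MonoidHom.isClosed_range_coe X Y)
  set S : Set C(X, Y) := {f | ⇑f ∈ T}
  have hS : range (fun f : S ↦ ⇑(f : C(X, Y))) = T :=
    Subset.antisymm (range_subset_iff.2 fun f ↦ f.2)
      fun g hg ↦ ⟨⟨⟨g, hT.continuous ⟨g, hg⟩⟩, hg⟩, rfl⟩
  have hScompact : IsCompact S := by
    refine ArzelaAscoli.isCompact_of_equicontinuous S ?_ (equicontinuous_iff_range.2 (hS ▸ hT))
    rw [image_eq_range]
    exact hS ▸ hTclosed.isCompact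
  convert (isClosedEmbedding_toContinuousMap X Y).isCompact_preimage hScompact using 1
  ext f
  exact ⟨fun hf ↦ ⟨⟨f, hf⟩, rfl⟩, fun ⟨g, hg⟩ ↦ show MapsTo f U V from hg ▸ g.2⟩

section

open Real

theorem Circle.mem_centeredArc_of_forall_pow_two_pow_mem {z : Circle} (n : ℕ)
    (hz : ∀ k ≤ n, z ^ 2 ^ k ∈ centeredArc (π / 2)) : z ∈ centeredArc (π / 2 ^ (n + 1)) := by
  induction n with
  | zero => simpa using hz 0 le_rfl
  | succ n ih =>
    simpa [div_div, ← pow_succ'] using mem_centeredArc_div (div_le_self pi_nonneg one_le_two)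
      (by simpa using ih fun k hk ↦ hz k (hk.trans n.le_succ)) (hz (n + 1) le_rfl)

theorem Circle.equicontinuousAt_one_of_mapsTo_centeredArc {X : Type*} [TopologicalSpace X]
    [Monoid X] [ContinuousMul X] {U : Set X} (hU : U ∈ 𝓝 1) {V : Set Circle}
    (hV : V ⊆ centeredArc (π / 2)) :
    EquicontinuousAt (fun f : {f : X →* Circle | MapsTo f U V} ↦ (f : X → Circle)) 1 := by
  rw [hasBasis_centeredArc_div_two_pow.uniformity_of_nhds_one.equicontinuousAt_iff_right]
  intro n _
  have hpow : ∀ᶠ x in 𝓝 (1 : X), ∀ k ∈ Iic n, x ^ 2 ^ k ∈ U :=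
    (eventually_all_finite (finite_Iic n)).2 fun k _ ↦
      (continuous_pow (2 ^ k)).tendsto' 1 1 (one_pow _) hU
  filter_upwards [hpow] with x hx f
  simp only [map_one, div_one]
  exact mem_centeredArc_of_forall_pow_two_pow_mem n fun k hk ↦
    map_pow (f : X →* Circle) x (2 ^ k) ▸ hV (f.2 (hx k hk))

theorem PontryaginDual.hemicompact {G : Type*} [CommGroup G] [TopologicalSpace G]
    [IsTopologicalGroup G] [FirstCountableTopology G] : Hemicompact (PontryaginDual G) := by
  obtain ⟨W, hW1, hWclosed, hWarc⟩ := exists_mem_nhds_isClosed_subset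
    ((Circle.isOpen_centeredArc (π / 2)).mem_nhds ⟨0, by simp [pi_pos], Circle.exp_zero⟩)
  obtain ⟨U, hU⟩ := (𝓝 (1 : G)).exists_antitone_basis
  refine ⟨fun n ↦ {χ | MapsTo χ (U n) W}, fun n ↦ ContinuousMonoidHom.isCompact_setOf_mapsTo
    hWclosed (Circle.equicontinuousAt_one_of_mapsTo_centeredArc (hU.mem n) hWarc), fun C hC ↦ ?_⟩
  have hnear : ∀ᶠ x in 𝓝 (1 : G), ∀ f ∈ ContinuousMonoidHom.toContinuousMap '' C,
      f x ∈ interior W :=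
    ContinuousMap.eventually_forall_mem_of_isCompact
      (hC.image (ContinuousMonoidHom.isEmbedding_toContinuousMap G Circle).continuous)
      isOpen_interior (forall_mem_image.2 fun χ _ ↦ by simpa using mem_interior_iff_mem_nhds.2 hW1)
  obtain ⟨n, -, hn⟩ := hU.eventually_iff.1 hnear
  exact ⟨n, fun χ hχ x hx ↦ interior_subset (hn hx _ (mem_image_of_mem _ hχ))⟩

end

theorem stmt12 {G : Type*} [CommGroup G] [TopologicalSpace G] [IsTopologicalGroup G]
    (hsub : Subreflexive G) :
    TopologicalSpace.MetrizableSpace G ↔ Hemicompact (PontryaginDual G) := by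
  refine ⟨fun _ ↦ PontryaginDual.hemicompact, fun h ↦ ?_⟩
  have := h.metrizableSpace_continuousMap (Y := Circle)
  exact ((ContinuousMonoidHom.isEmbedding_toContinuousMap _ _).comp hsub).metrizableSpace
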